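/- Let X ⊆ ℝ^s be compact, f : X → ℝ^p continuous, M_0 a p×p positive definite symmetric real matrix, a ∈ (0,1), and c ∈ ℝ^p. For a Borel probability measure ξ on X let M(ξ) = ∫_X f(x) f(x)ᵀ dξ(x) and R(ξ) = a·M(ξ) + (1−a)·M_0. Then a Borel probability measure ξ* minimizes cᵀ R(ξ)⁻¹ c over all Borel probability measures on X if and only if for every x ∈ X, ( f(x)ᵀ R(ξ*)⁻¹ c )² ≤ cᵀ R(ξ*)⁻¹ M(ξ*) R(ξ*)⁻¹ c. -/

import Mathlib

open Matrix MeasureTheory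

/-- Information matrix `M(ξ) = ∫ f(x) f(x)ᵀ dξ(x)` of a design `ξ` on `X`. -/
noncomputable def infoM {s p : ℕ} {X : Set (Fin s → ℝ)} (f : X → Fin p → ℝ)
    (ξ : Measure X) : Matrix (Fin p) (Fin p) ℝ :=
  Matrix.of fun i j => ∫ x, f x i * f x j ∂ξ

/-- Augmented information matrix `R(ξ) = a M(ξ) + (1 − a) M₀`. -/
noncomputable def augM {s p : ℕ} {X : Set (Fin s → ℝ)} (f : X → Fin p → ℝ)
    (M0 : Matrix (Fin p) (Fin p) ℝ) (a : ℝ) (ξ : Measure X) :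
    Matrix (Fin p) (Fin p) ℝ :=
  a • infoM f ξ + (1 - a) • M0

/-!
The c-criterion `A ↦ cᵀ A⁻¹ c` is convex on positive definite matrices, with tangent inequality
`cᵀ B⁻¹ c ≤ cᵀ A⁻¹ c + cᵀ B⁻¹ (A - B) B⁻¹ c`. With `N = R(ξ*)⁻¹` we have
`R(ξ) - R(ξ*) = a (M(ξ) - M(ξ*))` and `cᵀ N M(ξ) N c = ∫ (f(x)ᵀ N c)² dξ`, so the pointwise
bound makes the correction term nonpositive and `ξ*` optimal. Conversely, comparing `ξ*` with
the mixtures `(1 - t) ξ* + t δₓ` and letting `t → 0⁺` (inversion is continuous at `R(ξ*)`) shows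
that the directional derivative towards `δₓ` is nonnegative, which is the bound at `x`.
-/

open scoped Topology ENNReal

namespace Matrix

section Symmetric

variable {n α : Type*} [Fintype n] [CommSemiring α] {N : Matrix n n α}

lemma IsSymm.dotProduct_mulVec_comm (hN : N.IsSymm) (v w : n → α) :
    v ⬝ᵥ N *ᵥ w = w ⬝ᵥ N *ᵥ v := by
  rw [dotProduct_mulVec, ← mulVec_transpose, hN.eq, dotProduct_comm]

lemma IsSymm.dotProduct_mul_mul_mulVec (hN : N.IsSymm) (M : Matrix n n α) (c : n → α) :
    c ⬝ᵥ (N * M * N) *ᵥ c = (N *ᵥ c) ⬝ᵥ M *ᵥ (N *ᵥ c) := by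
  rw [← mulVec_mulVec, ← mulVec_mulVec, hN.dotProduct_mulVec_comm, dotProduct_comm]

lemma IsSymm.dotProduct_mul_vecMulVec_mul_mulVec (hN : N.IsSymm) (w c : n → α) :
    c ⬝ᵥ (N * vecMulVec w w * N) *ᵥ c = (w ⬝ᵥ N *ᵥ c) ^ 2 := by
  rw [hN.dotProduct_mul_mul_mulVec, vecMulVec_mulVec, op_smul_eq_smul, dotProduct_smul,
    smul_eq_mul, dotProduct_comm, sq]

end Symmetric

lemma dotProduct_mul_smul_sub_mul_mulVec {n α : Type*} [Fintype n] [CommRing α]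
    (N P Q : Matrix n n α) (a : α) (c : n → α) :
    c ⬝ᵥ (N * (a • (P - Q)) * N) *ᵥ c
      = a * (c ⬝ᵥ (N * P * N) *ᵥ c - c ⬝ᵥ (N * Q * N) *ᵥ c) := by
  rw [Matrix.mul_smul, smul_mul, smul_mulVec, dotProduct_smul, smul_eq_mul, Matrix.mul_sub,
    Matrix.sub_mul, sub_mulVec, dotProduct_sub]

variable {n : Type*} [Fintype n] [DecidableEq n]

lemma PosDef.dotProduct_inv_mulVec_le {A B : Matrix n n ℝ} (hA : A.PosDef) (hB : B.PosDef)
    (c : n → ℝ) :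
    c ⬝ᵥ B⁻¹ *ᵥ c ≤ c ⬝ᵥ A⁻¹ *ᵥ c + c ⬝ᵥ (B⁻¹ * (A - B) * B⁻¹) *ᵥ c := by
  have hAs : A.IsSymm := isHermitian_iff_isSymm.mp hA.isHermitian
  have hBs : B⁻¹.IsSymm := (isHermitian_iff_isSymm.mp hB.isHermitian).inv
  obtain ⟨u, hu, hAu⟩ : ∃ u, A⁻¹ *ᵥ c = u ∧ A *ᵥ u = c :=
    ⟨_, rfl, by rw [mulVec_mulVec, mul_nonsing_inv _ ((isUnit_iff_isUnit_det _).mp hA.isUnit),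
      one_mulVec]⟩
  obtain ⟨v, hv, hBv⟩ : ∃ v, B⁻¹ *ᵥ c = v ∧ B *ᵥ v = c :=
    ⟨_, rfl, by rw [mulVec_mulVec, mul_nonsing_inv _ ((isUnit_iff_isUnit_det _).mp hB.isUnit),
      one_mulVec]⟩
  have hquad : 0 ≤ (u - v) ⬝ᵥ A *ᵥ (u - v) := by
    simpa using hA.posSemidef.dotProduct_mulVec_nonneg (u - v)
  rw [mulVec_sub, dotProduct_sub, sub_dotProduct, sub_dotProduct,
    hAs.dotProduct_mulVec_comm u v] at hquad
  rw [hBs.dotProduct_mul_mul_mulVec, hu, hv, sub_mulVec, dotProduct_sub, hBv, ← hAu,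
    dotProduct_comm (A *ᵥ u) v, dotProduct_comm (A *ᵥ u) u]
  linarith

lemma PosDef.dotProduct_inv_mul_mul_inv_mulVec_nonpos {R D : Matrix n n ℝ} (hR : R.PosDef)
    (c : n → ℝ)
    (hmin : ∀ᶠ t in 𝓝[>] (0 : ℝ),
      (R + t • D).PosDef ∧ c ⬝ᵥ R⁻¹ *ᵥ c ≤ c ⬝ᵥ (R + t • D)⁻¹ *ᵥ c) :
    c ⬝ᵥ (R⁻¹ * D * R⁻¹) *ᵥ c ≤ 0 := by
  let g : ℝ → ℝ := fun t => c ⬝ᵥ ((R + t • D)⁻¹ * D * (R + t • D)⁻¹) *ᵥ c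
  have hinv : ContinuousAt (fun t : ℝ => (R + t • D)⁻¹) 0 := by
    refine ContinuousAt.comp (g := Inv.inv) ?_ (by fun_prop)
    rw [zero_smul, add_zero]
    exact continuousAt_matrix_inv R
      (by rw [Ring.inverse_eq_inv']; exact continuousAt_inv₀ hR.det_pos.ne')
  have hg : ContinuousAt g 0 := by
    have hΦ : Continuous fun N : Matrix n n ℝ => c ⬝ᵥ (N * D * N) *ᵥ c := by fun_prop
    exact hΦ.continuousAt.comp hinv
  have hg_nonpos : ∀ᶠ t in 𝓝[>] 0, g t ≤ 0 := by
    filter_upwards [hmin, self_mem_nhdsWithin] with t ⟨hRt, hle⟩ (ht : 0 < t)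
    have htangent := hR.dotProduct_inv_mulVec_le hRt c
    rw [show R - (R + t • D) = (-t) • D by module, Matrix.mul_smul, smul_mul, smul_mulVec,
      dotProduct_smul, smul_eq_mul] at htangent
    exact nonpos_of_mul_nonpos_right (by linarith) ht
  simpa [g] using le_of_tendsto (hg.tendsto.mono_left nhdsWithin_le_nhds) hg_nonpos

end Matrix

lemma isProbabilityMeasure_ofReal_smul_add {Ω : Type*} [MeasurableSpace Ω] (μ ν : Measure Ω)
    [IsProbabilityMeasure μ] [IsProbabilityMeasure ν] {t : ℝ} (ht₀ : 0 ≤ t) (ht₁ : t ≤ 1) :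
    IsProbabilityMeasure (ENNReal.ofReal (1 - t) • μ + ENNReal.ofReal t • ν) := by
  constructor
  simp only [Measure.add_apply, Measure.smul_apply, measure_univ, smul_eq_mul, mul_one]
  rw [← ENNReal.ofReal_add (by linarith) ht₀, sub_add_cancel, ENNReal.ofReal_one]

section Design

variable {s p : ℕ} {X : Set (Fin s → ℝ)} {f : X → Fin p → ℝ}

lemma infoM_smul_measure (r : ℝ≥0∞) (ξ : Measure X) :
    infoM f (r • ξ) = r.toReal • infoM f ξ := by
  ext i j
  exact integral_smul_measure _ r

lemma infoM_dirac (x : X) : infoM f (Measure.dirac x) = vecMulVec (f x) (f x) := by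
  ext i j
  exact integral_dirac _ x

lemma augM_sub_augM (M0 : Matrix (Fin p) (Fin p) ℝ) (a : ℝ) (ξ ξ' : Measure X) :
    augM f M0 a ξ - augM f M0 a ξ' = a • (infoM f ξ - infoM f ξ') := by
  unfold augM
  module

variable [CompactSpace X]

lemma integrable_mul_apply (hf : Continuous f) (ξ : Measure X) [IsFiniteMeasure ξ]
    (i j : Fin p) : Integrable (fun x => f x i * f x j) ξ :=
  (by fun_prop : Continuous fun x => f x i * f x j).integrable_of_hasCompactSupport
    (.of_compactSpace _)

lemma dotProduct_infoM_mulVec (hf : Continuous f) (ξ : Measure X) [IsFiniteMeasure ξ]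
    (v w : Fin p → ℝ) :
    v ⬝ᵥ infoM f ξ *ᵥ w = ∫ x, (f x ⬝ᵥ v) * (f x ⬝ᵥ w) ∂ξ := by
  have hint (i j : Fin p) : Integrable (fun x => v i * w j * (f x i * f x j)) ξ :=
    (integrable_mul_apply hf ξ i j).const_mul _
  calc v ⬝ᵥ infoM f ξ *ᵥ w = ∑ i, ∑ j, ∫ x, v i * w j * (f x i * f x j) ∂ξ := by
        simp only [dotProduct, mulVec, infoM, of_apply, Finset.mul_sum, integral_const_mul]
        exact Finset.sum_congr rfl fun i _ => Finset.sum_congr rfl fun j _ => by ring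
    _ = ∫ x, ∑ i, ∑ j, v i * w j * (f x i * f x j) ∂ξ := by
        rw [integral_finsetSum _ fun i _ => integrable_finsetSum _ fun j _ => hint i j]
        exact Finset.sum_congr rfl fun i _ => (integral_finsetSum _ fun j _ => hint i j).symm
    _ = ∫ x, (f x ⬝ᵥ v) * (f x ⬝ᵥ w) ∂ξ := by
        simp only [dotProduct, Finset.sum_mul_sum]
        congr 1; ext x
        exact Finset.sum_congr rfl fun i _ => Finset.sum_congr rfl fun j _ => by ring

lemma infoM_posSemidef (hf : Continuous f) (ξ : Measure X) [IsFiniteMeasure ξ] :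
    (infoM f ξ).PosSemidef := by
  refine .of_dotProduct_mulVec_nonneg ?_ fun v => ?_
  · refine isHermitian_iff_isSymm.mpr (IsSymm.ext fun i j => ?_)
    simp only [infoM, of_apply, mul_comm]
  · rw [star_trivial, dotProduct_infoM_mulVec hf]
    exact integral_nonneg fun x => mul_self_nonneg _

lemma augM_posDef (hf : Continuous f) {M0 : Matrix (Fin p) (Fin p) ℝ} (hM0 : M0.PosDef)
    {a : ℝ} (ha : a ∈ Set.Ioo (0 : ℝ) 1) (ξ : Measure X) [IsFiniteMeasure ξ] :
    (augM f M0 a ξ).PosDef :=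
  PosDef.posSemidef_add ((infoM_posSemidef hf ξ).smul ha.1.le) (hM0.smul (sub_pos.mpr ha.2))

lemma Matrix.IsSymm.dotProduct_mul_infoM_mul_mulVec (hf : Continuous f) (ξ : Measure X)
    [IsFiniteMeasure ξ] {N : Matrix (Fin p) (Fin p) ℝ} (hN : N.IsSymm) (c : Fin p → ℝ) :
    c ⬝ᵥ (N * infoM f ξ * N) *ᵥ c = ∫ x, (f x ⬝ᵥ N *ᵥ c) ^ 2 ∂ξ := by
  simp only [hN.dotProduct_mul_mul_mulVec, dotProduct_infoM_mulVec hf, sq]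

lemma Matrix.IsSymm.dotProduct_mul_infoM_mul_mulVec_le (hf : Continuous f) (ξ : Measure X)
    [IsProbabilityMeasure ξ] {N : Matrix (Fin p) (Fin p) ℝ} (hN : N.IsSymm) (c : Fin p → ℝ)
    {K : ℝ} (hK : ∀ x, (f x ⬝ᵥ N *ᵥ c) ^ 2 ≤ K) :
    c ⬝ᵥ (N * infoM f ξ * N) *ᵥ c ≤ K := by
  rw [hN.dotProduct_mul_infoM_mul_mulVec hf ξ]
  have hint : Integrable (fun x => (f x ⬝ᵥ N *ᵥ c) ^ 2) ξ :=
    (by fun_prop : Continuous fun x => (f x ⬝ᵥ N *ᵥ c) ^ 2).integrable_of_hasCompactSupport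
      (.of_compactSpace _)
  simpa using integral_mono hint (integrable_const K) hK

lemma infoM_add_measure (hf : Continuous f) (μ ν : Measure X) [IsFiniteMeasure μ]
    [IsFiniteMeasure ν] : infoM f (μ + ν) = infoM f μ + infoM f ν := by
  ext i j
  exact integral_add_measure (integrable_mul_apply hf μ i j) (integrable_mul_apply hf ν i j)

lemma augM_ofReal_smul_add (hf : Continuous f) (M0 : Matrix (Fin p) (Fin p) ℝ) (a : ℝ)
    (μ ν : Measure X) [IsFiniteMeasure μ] [IsFiniteMeasure ν] {t : ℝ} (ht₀ : 0 ≤ t)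
    (ht₁ : t ≤ 1) :
    augM f M0 a (ENNReal.ofReal (1 - t) • μ + ENNReal.ofReal t • ν)
      = augM f M0 a μ + t • (a • (infoM f ν - infoM f μ)) := by
  have := μ.smul_finite (ENNReal.ofReal_ne_top (r := 1 - t))
  have := ν.smul_finite (ENNReal.ofReal_ne_top (r := t))
  rw [augM, augM, infoM_add_measure hf, infoM_smul_measure, infoM_smul_measure,
    ENNReal.toReal_ofReal (by linarith), ENNReal.toReal_ofReal ht₀]
  module

end Design

/-- c-criterion case of the general equivalence theorem for augmented designs:
`ξ*` minimizes `cᵀ R(ξ)⁻¹ c` over all designs iff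
`(f(x)ᵀ R(ξ*)⁻¹ c)² ≤ cᵀ R(ξ*)⁻¹ M(ξ*) R(ξ*)⁻¹ c` for every `x ∈ X`. -/
theorem stmt10 {s p : ℕ} (X : Set (Fin s → ℝ)) (hX : IsCompact X)
    (f : X → Fin p → ℝ) (hf : Continuous f)
    (M0 : Matrix (Fin p) (Fin p) ℝ) (hM0 : M0.PosDef)
    (a : ℝ) (ha : a ∈ Set.Ioo (0 : ℝ) 1) (c : Fin p → ℝ)
    (ξs : Measure X) [IsProbabilityMeasure ξs] :
    (∀ ξ : Measure X, IsProbabilityMeasure ξ →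
        c ⬝ᵥ (augM f M0 a ξs)⁻¹ *ᵥ c ≤ c ⬝ᵥ (augM f M0 a ξ)⁻¹ *ᵥ c) ↔
      ∀ x : X, (f x ⬝ᵥ (augM f M0 a ξs)⁻¹ *ᵥ c) ^ 2 ≤
        c ⬝ᵥ ((augM f M0 a ξs)⁻¹ * infoM f ξs * (augM f M0 a ξs)⁻¹) *ᵥ c := by
  have := isCompact_iff_compactSpace.mp hX
  have hR := augM_posDef hf hM0 ha ξs
  have hN : (augM f M0 a ξs)⁻¹.IsSymm := (isHermitian_iff_isSymm.mp hR.isHermitian).inv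
  constructor
  · intro hopt x
    have hdir := hR.dotProduct_inv_mul_mul_inv_mulVec_nonpos c
      (D := a • (vecMulVec (f x) (f x) - infoM f ξs)) <| by
      filter_upwards [Ioo_mem_nhdsGT one_pos] with t ht
      have := isProbabilityMeasure_ofReal_smul_add ξs (Measure.dirac x) ht.1.le ht.2.le
      rw [← infoM_dirac, ← augM_ofReal_smul_add hf M0 a ξs _ ht.1.le ht.2.le]
      exact ⟨augM_posDef hf hM0 ha _, hopt _ this⟩
    rw [dotProduct_mul_smul_sub_mul_mulVec, hN.dotProduct_mul_vecMulVec_mul_mulVec] at hdir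
    exact sub_nonpos.mp (nonpos_of_mul_nonpos_right hdir ha.1)
  · intro hbound ξ _
    have htangent := (augM_posDef hf hM0 ha ξ).dotProduct_inv_mulVec_le hR c
    rw [augM_sub_augM, dotProduct_mul_smul_sub_mul_mulVec] at htangent
    have hsens := hN.dotProduct_mul_infoM_mul_mulVec_le hf ξ c hbound
    linarith [mul_nonpos_of_nonneg_of_nonpos ha.1.le (sub_nonpos.mpr hsens)]
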